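/- For every positive integer n, the tree-independence number of the complete bipartite graph K_{n,n} equals n. -/

import Mathlib

open SimpleGraph

/-- `S` is an independent set in `G`. -/
def IsIndepOn {V : Type} (G : SimpleGraph V) (S : Set V) : Prop :=
  S.Pairwise fun u v => ¬ G.Adj u v

/-- The independence number of `G`. -/
noncomputable def indepNum {V : Type} (G : SimpleGraph V) : ℕ :=
  sSup {n | ∃ S : Set V, IsIndepOn G S ∧ S.ncard = n}

/-- The clique number of `G`. -/
noncomputable def cliqueNumber {V : Type} (G : SimpleGraph V) : ℕ :=
  sSup {n | ∃ S : Set V, G.IsClique S ∧ S.ncard = n}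

/-- A tree decomposition of a graph `G`. -/
structure TreeDecomp {V : Type} (G : SimpleGraph V) where
  ι : Type
  tree : SimpleGraph ι
  tree_isTree : tree.IsTree
  bag : ι → Set V
  mem_bag : ∀ v : V, ∃ t, v ∈ bag t
  edge_bag : ∀ ⦃u v : V⦄, G.Adj u v → ∃ t, u ∈ bag t ∧ v ∈ bag t
  bag_connected : ∀ v : V, (tree.induce {t | v ∈ bag t}).Connected

/-- The independence number of a family of bags: the maximum independence number
of a subgraph of `G` induced by some bag. -/
noncomputable def bagAlpha {V : Type} (G : SimpleGraph V) {ι : Type} (bag : ι → Set V) : ℕ :=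
  sSup {n | ∃ t, ∃ S : Set V, S ⊆ bag t ∧ IsIndepOn G S ∧ S.ncard = n}

/-- The independence number of a tree decomposition. -/
noncomputable def tdAlpha {V : Type} {G : SimpleGraph V} (td : TreeDecomp G) : ℕ :=
  bagAlpha G td.bag

/-- The width of a tree decomposition: maximum bag size minus one. -/
noncomputable def tdWidth {V : Type} {G : SimpleGraph V} (td : TreeDecomp G) : ℕ :=
  sSup {n | ∃ t, (td.bag t).ncard = n} - 1

/-- The treewidth of `G`. -/
noncomputable def treewidth {V : Type} (G : SimpleGraph V) : ℕ :=
  sInf {w | ∃ td : TreeDecomp G, tdWidth td = w}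

/-- The tree-independence number of `G`. -/
noncomputable def treeIndepNum {V : Type} (G : SimpleGraph V) : ℕ :=
  sInf {k | ∃ td : TreeDecomp G, tdAlpha td = k}

/-- A graph is chordal if it has no induced cycle of length at least four. -/
def Chordal {V : Type} (G : SimpleGraph V) : Prop :=
  ∀ n : ℕ, 4 ≤ n → IsEmpty (cycleGraph n ↪g G)

/-!
The bags containing a fixed vertex form a subtree of the decomposition tree (a vertex set `s`
with `G.induce s` preconnected), and finitely many pairwise meeting subtrees of a tree share a
vertex (Helly). In a decomposition of `K_{n,n}` the subtree of every left vertex meets that of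
every right vertex. If the left subtrees pairwise meet, one bag contains the whole left side.
Otherwise two of them, `A` and `A'`, are disjoint; then any two right subtrees `B`, `B'` meet,
since Helly applied to `A ∪ B'`, `B`, `A'` gives a vertex in `B ∩ B'` or in `A ∩ A'`. So one bag
contains a whole side, an independent set of size `n`; conversely every independent set of
`K_{n,n}` lies in one side, so the one-bag decomposition is optimal.
-/

namespace SimpleGraph

variable {V : Type*} {G : SimpleGraph V} {s t : Set V}

lemma Preconnected.exists_walk_support_subset (hs : (G.induce s).Preconnected) {u v : V}
    (hu : u ∈ s) (hv : v ∈ s) : ∃ w : G.Walk u v, ∀ x ∈ w.support, x ∈ s := by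
  have support_map_induce {a b : s} (w : (G.induce s).Walk a b) :
      ∀ x ∈ (w.map (Embedding.induce s).toHom).support, x ∈ s := by
    intro x hx
    rw [Walk.support_map, List.mem_map] at hx
    obtain ⟨y, -, rfl⟩ := hx
    exact y.2
  obtain ⟨w⟩ := hs ⟨u, hu⟩ ⟨v, hv⟩
  exact ⟨_, support_map_induce w⟩

lemma preconnected_induce_of_forall_exists_walk
    (h : ∀ u ∈ s, ∀ v ∈ s, ∃ w : G.Walk u v, ∀ x ∈ w.support, x ∈ s) :
    (G.induce s).Preconnected := by
  rintro ⟨u, hu⟩ ⟨v, hv⟩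
  obtain ⟨w, hw⟩ := h u hu v hv
  exact ⟨w.induce s hw⟩

namespace IsAcyclic

variable (hG : G.IsAcyclic)
include hG

lemma support_subset_of_isPath (hs : (G.induce s).Preconnected) {u v : V} (hu : u ∈ s)
    (hv : v ∈ s) {p : G.Walk u v} (hp : p.IsPath) : ∀ x ∈ p.support, x ∈ s := by
  classical
  obtain ⟨w, hw⟩ := hs.exists_walk_support_subset hu hv
  have hpw : p = w.bypass :=
    congrArg Subtype.val ((hG.subsingleton_path u v).elim ⟨p, hp⟩ ⟨w.bypass, w.bypass_isPath⟩)
  intro x hx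
  exact hw x (w.support_bypass_subset_support (hpw ▸ hx))

lemma preconnected_induce_inter (hs : (G.induce s).Preconnected)
    (ht : (G.induce t).Preconnected) : (G.induce (s ∩ t)).Preconnected := by
  classical
  refine preconnected_induce_of_forall_exists_walk fun u hu v hv => ?_
  obtain ⟨w, -⟩ := hs.exists_walk_support_subset hu.1 hv.1
  exact ⟨w.bypass, fun x hx => ⟨hG.support_subset_of_isPath hs hu.1 hv.1 w.bypass_isPath x hx,
    hG.support_subset_of_isPath ht hu.2 hv.2 w.bypass_isPath x hx⟩⟩

lemma mem_or_mem_of_adj (hs : (G.induce s).Preconnected) (ht : (G.induce t).Preconnected)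
    (hst : (s ∩ t).Nonempty) {u v : V} (hu : u ∈ s) (hv : v ∈ t) (huv : G.Adj u v) :
    u ∈ t ∨ v ∈ s := by
  classical
  obtain ⟨p, hps, hpt⟩ := hst
  obtain ⟨w, hw⟩ := hs.exists_walk_support_subset hps hu
  by_cases hvw : v ∈ w.bypass.support
  · exact Or.inr (hw v (w.support_bypass_subset_support hvw))
  · refine Or.inl (hG.support_subset_of_isPath ht hpt hv (w.bypass_isPath.concat hvw huv) u ?_)
    simp [Walk.support_concat]

lemma helly_three {r : Set V} (hs : (G.induce s).Preconnected) (ht : (G.induce t).Preconnected)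
    (hr : (G.induce r).Preconnected) (hst : (s ∩ t).Nonempty) (hsr : (s ∩ r).Nonempty)
    (htr : (t ∩ r).Nonempty) : (s ∩ t ∩ r).Nonempty := by
  classical
  obtain ⟨p, hps, hpt⟩ := hst
  obtain ⟨q, hqs, hqr⟩ := hsr
  obtain ⟨z, hzt, hzr⟩ := htr
  by_cases hzs : z ∈ s
  · exact ⟨z, ⟨hzs, hzt⟩, hzr⟩
  obtain ⟨w₁, hw₁⟩ := hs.exists_walk_support_subset hqs hps
  obtain ⟨w₂, hw₂⟩ := ht.exists_walk_support_subset hpt hzt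
  -- the path from `q` to `z` lies in `r` and in `s ∪ t`; look where it leaves `s`
  set P := (w₁.append w₂).bypass
  have hPst : ∀ x ∈ P.support, x ∈ s ∨ x ∈ t := by
    intro x hx
    rcases (Walk.mem_support_append_iff _ _).mp (Walk.support_bypass_subset_support _ hx) with h | h
    exacts [Or.inl (hw₁ x h), Or.inr (hw₂ x h)]
  have hPr := hG.support_subset_of_isPath hr hqr hzr (w₁.append w₂).bypass_isPath
  obtain ⟨d, hd, hds, hdns⟩ := P.exists_boundary_dart s hqs hzs
  have hfst := P.dart_fst_mem_support_of_mem_darts hd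
  have hsnd := P.dart_snd_mem_support_of_mem_darts hd
  have hdt : d.snd ∈ t := (hPst _ hsnd).resolve_left hdns
  rcases hG.mem_or_mem_of_adj hs ht ⟨p, hps, hpt⟩ hds hdt d.adj with h | h
  · exact ⟨d.fst, ⟨hds, h⟩, hPr _ hfst⟩
  · exact absurd h hdns

lemma helly {ι : Type*} {F : ι → Set V} {I : Finset ι} (hI : I.Nonempty)
    (hF : ∀ i ∈ I, (G.induce (F i)).Preconnected) (hFF : ∀ i ∈ I, ∀ j ∈ I, (F i ∩ F j).Nonempty) :
    (⋂ i ∈ I, F i).Nonempty := by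
  induction hI using Finset.Nonempty.cons_induction generalizing F with
  | singleton a => simpa using hFF a (by simp) a (by simp)
  | cons a I ha hI ih =>
    simp only [Finset.mem_cons, forall_eq_or_imp] at hF hFF
    obtain ⟨x, hx⟩ := ih (F := fun i => F i ∩ F a)
      (fun i hi => hG.preconnected_induce_inter (hF.2 i hi) hF.1)
      (fun i hi j hj => by
        obtain ⟨x, ⟨hxi, hxj⟩, hxa⟩ := hG.helly_three (hF.2 i hi) (hF.2 j hj) hF.1
          ((hFF.2 i hi).2 j hj) (hFF.2 i hi).1 (hFF.2 j hj).1
        exact ⟨x, ⟨hxi, hxa⟩, hxj, hxa⟩)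
    simp only [Set.mem_iInter₂] at hx
    obtain ⟨i, hi⟩ := hI
    refine ⟨x, ?_⟩
    simp only [Set.mem_iInter₂, Finset.mem_cons, forall_eq_or_imp]
    exact ⟨(hx i hi).2, fun j hj => (hx j hj).1⟩

lemma biInter_nonempty_or_biInter_nonempty {α β : Type*} {F : α → Set V} {H : β → Set V}
    {I : Finset α} {J : Finset β} (hI : I.Nonempty) (hJ : J.Nonempty)
    (hF : ∀ i ∈ I, (G.induce (F i)).Preconnected) (hH : ∀ j ∈ J, (G.induce (H j)).Preconnected)
    (hFH : ∀ i ∈ I, ∀ j ∈ J, (F i ∩ H j).Nonempty) :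
    (⋂ i ∈ I, F i).Nonempty ∨ (⋂ j ∈ J, H j).Nonempty := by
  by_cases hFF : ∀ i ∈ I, ∀ i' ∈ I, (F i ∩ F i').Nonempty
  · exact Or.inl (hG.helly hI hF hFF)
  push Not at hFF
  obtain ⟨a, ha, a', ha', hdisj⟩ := hFF
  refine Or.inr (hG.helly hJ hH fun j hj j' hj' => ?_)
  -- the subtrees `F a, H j, F a', H j'` form a 4-cycle; `F a ∪ H j'` closes it into a triangle
  have hU : (G.induce (F a ∪ H j')).Preconnected :=
    (induce_union_connected (hF a ha) (hH j' hj') (hFH a ha j' hj')).preconnected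
  obtain ⟨x, ⟨hxU, hxj⟩, hxa'⟩ := hG.helly_three hU (hH j hj) (hF a' ha')
    ((hFH a ha j hj).mono (Set.inter_subset_inter_left _ Set.subset_union_left))
    (by obtain ⟨x, hxa', hxj'⟩ := hFH a' ha' j' hj'; exact ⟨x, Or.inr hxj', hxa'⟩)
    (by obtain ⟨x, hxa', hxj⟩ := hFH a' ha' j hj; exact ⟨x, hxj, hxa'⟩)
  rcases hxU with hxa | hxj'
  · exact absurd hdisj (Set.nonempty_iff_ne_empty.mp ⟨x, hxa, hxa'⟩)
  · exact ⟨x, hxj, hxj'⟩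

end IsAcyclic

end SimpleGraph

section CompleteBipartite

variable {α β : Type} {S : Set (α ⊕ β)}

lemma isIndepOn_range_inl : IsIndepOn (completeBipartiteGraph α β) (Set.range Sum.inl) := by
  rintro _ ⟨a, rfl⟩ _ ⟨b, rfl⟩ -
  simp

lemma isIndepOn_range_inr : IsIndepOn (completeBipartiteGraph α β) (Set.range Sum.inr) := by
  rintro _ ⟨a, rfl⟩ _ ⟨b, rfl⟩ -
  simp

lemma IsIndepOn.subset_range_inl_or_subset_range_inr
    (hS : IsIndepOn (completeBipartiteGraph α β) S) :
    S ⊆ Set.range Sum.inl ∨ S ⊆ Set.range Sum.inr := by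
  by_contra! h
  obtain ⟨_ | b, hbS, hb⟩ := Set.not_subset.mp h.1
  · exact hb ⟨_, rfl⟩
  obtain ⟨a | _, haS, ha⟩ := Set.not_subset.mp h.2
  · exact hS haS hbS (by simp) (by simp)
  · exact ha ⟨_, rfl⟩

lemma IsIndepOn.ncard_le_max [Finite α] [Finite β]
    (hS : IsIndepOn (completeBipartiteGraph α β) S) :
    S.ncard ≤ max (Nat.card α) (Nat.card β) := by
  rcases hS.subset_range_inl_or_subset_range_inr with h | h
  · calc S.ncard ≤ (Set.range Sum.inl).ncard := Set.ncard_le_ncard h (Set.finite_range _)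
      _ = Nat.card α := Set.ncard_range_of_injective Sum.inl_injective
      _ ≤ _ := le_max_left _ _
  · calc S.ncard ≤ (Set.range Sum.inr).ncard := Set.ncard_le_ncard h (Set.finite_range _)
      _ = Nat.card β := Set.ncard_range_of_injective Sum.inr_injective
      _ ≤ _ := le_max_right _ _

end CompleteBipartite

section BagAlpha

variable {V ι : Type} {G : SimpleGraph V} {bag : ι → Set V} {k : ℕ}

lemma bagAlpha_le (hk : ∀ S, IsIndepOn G S → S.ncard ≤ k) : bagAlpha G bag ≤ k :=
  csSup_le' (by rintro _ ⟨t, S, -, hS, rfl⟩; exact hk S hS)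

lemma ncard_le_bagAlpha (hk : ∀ S, IsIndepOn G S → S.ncard ≤ k) {t : ι} {S : Set V}
    (hSt : S ⊆ bag t) (hS : IsIndepOn G S) : S.ncard ≤ bagAlpha G bag :=
  le_csSup ⟨k, by rintro _ ⟨t, S, -, hS, rfl⟩; exact hk S hS⟩ ⟨t, S, hSt, hS, rfl⟩

end BagAlpha

namespace TreeDecomp

def single {V : Type} (G : SimpleGraph V) : TreeDecomp G where
  ι := Unit
  tree := ⊥
  tree_isTree := .of_subsingleton
  bag _ := Set.univ
  mem_bag _ := ⟨(), trivial⟩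
  edge_bag _ _ _ := ⟨(), trivial, trivial⟩
  bag_connected v := by
    have : Nonempty {t : Unit | v ∈ Set.univ} := ⟨⟨(), trivial⟩⟩
    exact .of_subsingleton

lemma exists_range_inl_subset_or_range_inr_subset {α β : Type} [Fintype α] [Nonempty α]
    [Fintype β] [Nonempty β] (td : TreeDecomp (completeBipartiteGraph α β)) :
    ∃ t, Set.range Sum.inl ⊆ td.bag t ∨ Set.range Sum.inr ⊆ td.bag t := by
  rcases td.tree_isTree.isAcyclic.biInter_nonempty_or_biInter_nonempty
      (F := fun a => {t | Sum.inl a ∈ td.bag t}) (H := fun b => {t | Sum.inr b ∈ td.bag t})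
      Finset.univ_nonempty Finset.univ_nonempty
      (fun a _ => (td.bag_connected _).preconnected) (fun b _ => (td.bag_connected _).preconnected)
      (fun a _ b _ => td.edge_bag (by simp)) with ⟨t, ht⟩ | ⟨t, ht⟩ <;>
    simp only [Finset.mem_univ, Set.iInter_true, Set.mem_iInter, Set.mem_ofPred_eq] at ht
  · exact ⟨t, Or.inl (Set.range_subset_iff.mpr ht)⟩
  · exact ⟨t, Or.inr (Set.range_subset_iff.mpr ht)⟩

end TreeDecomp

section TreeIndepNum

variable {V : Type} {G : SimpleGraph V}

lemma treeIndepNum_le_tdAlpha (td : TreeDecomp G) : treeIndepNum G ≤ tdAlpha td :=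
  Nat.sInf_le ⟨td, rfl⟩

lemma le_treeIndepNum {k : ℕ} (h : ∀ td : TreeDecomp G, k ≤ tdAlpha td) : k ≤ treeIndepNum G :=
  le_csInf ⟨_, TreeDecomp.single G, rfl⟩ (by rintro _ ⟨td, rfl⟩; exact h td)

end TreeIndepNum

theorem stmt5 (n : ℕ) (hn : 1 ≤ n) :
    treeIndepNum (completeBipartiteGraph (Fin n) (Fin n)) = n := by
  have : Nonempty (Fin n) := ⟨⟨0, hn⟩⟩
  have hindep (S : Set (Fin n ⊕ Fin n)) (hS : IsIndepOn (completeBipartiteGraph _ _) S) :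
      S.ncard ≤ n := by
    simpa using hS.ncard_le_max
  refine le_antisymm ((treeIndepNum_le_tdAlpha (.single _)).trans (bagAlpha_le hindep))
    (le_treeIndepNum fun td => ?_)
  obtain ⟨t, ht | ht⟩ := td.exists_range_inl_subset_or_range_inr_subset
  · simpa [tdAlpha, Set.ncard_range_of_injective Sum.inl_injective] using
      ncard_le_bagAlpha hindep ht isIndepOn_range_inl
  · simpa [tdAlpha, Set.ncard_range_of_injective Sum.inr_injective] using
      ncard_le_bagAlpha hindep ht isIndepOn_range_inr
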